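/- Let p_0, p_1, ..., p_N be N+1 distinct real numbers and let w_0, ..., w_N be positive weights. Let P_n(·;N) be a degree-n polynomial (1 ≤ n ≤ N-1) orthogonal to all polynomials of degree < n with respect to the bilinear form ⟨f,g⟩_N = Σ_{s=0}^{N-1} w_s f(p_s) g(p_s), and let P_n(·;N+1) be a degree-n polynomial orthogonal to all polynomials of degree < n with respect to ⟨f,g⟩_{N+1} = Σ_{s=0}^{N} w_s f(p_s) g(p_s). Let Y_1 < Y_2 < ⋯ < Y_n denote the zeros of P_n(·;N). Then: (i) if P_n(p_N;N) = 0, the zeros of P_n(·;N+1) are exactly those of P_n(·;N); (ii) if P_n(p_N;N) ≠ 0 and p_N ∉ (Y_k, Y_{k+1}) for a fixed k ∈ {1,...,n-1}, then P_n(·;N+1) has a zero in (Y_k, Y_{k+1}); (iii) if P_n(p_N;N) ≠ 0 and p_N ∈ (Y_k, Y_{k+1}) for a fixed k ∈ {1,...,n-1}, then P_n(·;N+1) has a zero in each of the intervals (Y_k, p_N) and (p_N, Y_{k+1}). -/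

import Mathlib

/-!
Let `y` be a zero of `P` and write `P = (X - y) f`. For `deg R ≤ n` the polynomial `R - R(y)` is
`X - y` times a polynomial of degree `< n`, so orthogonality of `P` gives the one-node quadrature
`⟨R, f⟩_N = R(y) ⟨1, f⟩_N`. With `R = f` this shows `f(y) ⟨1, f⟩_N = ⟨f, f⟩_N > 0`, so the zeros
of `P` are simple; with `R = Q`, and since `⟨Q, f⟩_{N+1} = 0`, it gives
`Q(y) ⟨f, f⟩_N = -w_N Q(p_N) f(p_N) f(y)`.
Hence `Q(y) Q(p_N)` and `f(p_N) f(y)` have opposite signs. For adjacent zeros `a < b` of `P` write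
`P = (X - a)(X - b) g` with `g` of constant sign on `[a, b]`; comparing the signs of `Q` at `a`,
`b` and `p_N` and using the intermediate value theorem gives (ii) and (iii). Part (i) is the
uniqueness of orthogonal polynomials: if `P(p_N) = 0`, then `P` is also orthogonal for
`⟨·,·⟩_{N+1}`, so `Q` is a multiple of `P`.
-/

open Polynomial Finset

theorem natDegree_lt_of_eq_X_sub_C_mul {R : Type*} [CommRing R] [IsDomain R] {P f : R[X]} {a : R}
    (hP0 : P ≠ 0) (hPf : P = (X - C a) * f) : f.natDegree < P.natDegree := by
  have hf0 : f ≠ 0 := by rintro rfl; exact hP0 (by rw [hPf, mul_zero])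
  rw [hPf, natDegree_mul (X_sub_C_ne_zero a) hf0, natDegree_X_sub_C]
  omega

theorem exists_eq_X_sub_C_mul_X_sub_C_mul {R : Type*} [CommRing R] [IsDomain R] {P : R[X]}
    {a b : R} (ha : P.IsRoot a) (hb : P.IsRoot b) (hab : a ≠ b) :
    ∃ g, P = (X - C a) * ((X - C b) * g) := by
  have hPf : (X - C a) * (P /ₘ (X - C a)) = P := mul_divByMonic_eq_iff_isRoot.mpr ha
  have hfb : (P /ₘ (X - C a)).IsRoot b := by
    have := congrArg (eval b) hPf
    rw [eval_mul, eval_sub, eval_X, eval_C, hb.eq_zero] at this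
    exact (mul_eq_zero.mp this).resolve_left (sub_ne_zero.mpr hab.symm)
  exact ⟨_, by rw [mul_divByMonic_eq_iff_isRoot.mpr hfb, hPf]⟩

theorem exists_mem_Ioo_eq_zero_of_mul_neg {f : ℝ → ℝ} (hf : Continuous f) {a b : ℝ} (hab : a ≤ b)
    (h : f a * f b < 0) : ∃ x ∈ Set.Ioo a b, f x = 0 := by
  rcases mul_neg_iff.mp h with ⟨ha, hb⟩ | ⟨ha, hb⟩
  · exact intermediate_value_Ioo' hab hf.continuousOn ⟨hb, ha⟩
  · exact intermediate_value_Ioo hab hf.continuousOn ⟨ha, hb⟩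

theorem mul_pos_of_forall_mem_Icc_ne_zero {f : ℝ → ℝ} (hf : Continuous f) {a b : ℝ} (hab : a ≤ b)
    (h : ∀ x ∈ Set.Icc a b, f x ≠ 0) : 0 < f a * f b := by
  refine (mul_ne_zero (h a ⟨le_rfl, hab⟩) (h b ⟨hab, le_rfl⟩)).lt_or_gt.resolve_left fun hneg => ?_
  obtain ⟨x, hx, hx0⟩ := exists_mem_Ioo_eq_zero_of_mul_neg hf hab hneg
  exact h x (Set.Ioo_subset_Icc_self hx) hx0

theorem StrictMonoOn.notMem_Ioo {α : Type*} [Preorder α] {Y : ℕ → α} {n i k : ℕ}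
    (hY : StrictMonoOn Y (Set.Icc 1 n)) (hi : i ∈ Set.Icc 1 n) (hk1 : 1 ≤ k) (hk2 : k + 1 ≤ n) :
    Y i ∉ Set.Ioo (Y k) (Y (k + 1)) := fun hYi => by
  have := (hY.lt_iff_lt ⟨hk1, by omega⟩ hi).mp hYi.1
  have := (hY.lt_iff_lt hi ⟨by omega, hk2⟩).mp hYi.2
  omega

/-- `⟨f, g⟩_N` in the notation of the paper is `discreteForm (range N) w p f g`. -/
def discreteForm (S : Finset ℕ) (w p : ℕ → ℝ) (f g : ℝ[X]) : ℝ :=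
  ∑ s ∈ S, w s * f.eval (p s) * g.eval (p s)

def IsOrthogonalPoly (S : Finset ℕ) (w p : ℕ → ℝ) (n : ℕ) (P : ℝ[X]) : Prop :=
  ∀ f : ℝ[X], f.natDegree < n → discreteForm S w p P f = 0

section DiscreteForm

variable {S : Finset ℕ} {w p : ℕ → ℝ} {n : ℕ}

theorem discreteForm_self_pos {f : ℝ[X]} (hp : Set.InjOn p S) (hw : ∀ s ∈ S, 0 < w s)
    (hf0 : f ≠ 0) (hf : f.natDegree < #S) : 0 < discreteForm S w p f f := by
  obtain ⟨s, hs, hfs⟩ : ∃ s ∈ S, f.eval (p s) ≠ 0 := by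
    by_contra! h
    refine hf0 (eq_zero_of_natDegree_lt_card_of_eval_eq_zero' f (S.image p) ?_ ?_)
    · simpa using h
    · rwa [card_image_of_injOn hp]
  refine sum_pos' (fun t ht => ?_) ⟨s, hs, ?_⟩
  · rw [mul_assoc]; exact mul_nonneg (hw t ht).le (mul_self_nonneg _)
  · rw [mul_assoc]; exact mul_pos (hw s hs) (mul_self_pos.mpr hfs)

theorem IsOrthogonalPoly.C_leadingCoeff_mul_eq {P Q : ℝ[X]} (hP : IsOrthogonalPoly S w p n P)
    (hQ : IsOrthogonalPoly S w p n Q) (hPdeg : P.natDegree = n) (hQdeg : Q.natDegree = n)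
    (hp : Set.InjOn p S) (hw : ∀ s ∈ S, 0 < w s) (hn : n < #S) :
    C Q.leadingCoeff * P = C P.leadingCoeff * Q := by
  set D := C Q.leadingCoeff * P - C P.leadingCoeff * Q with hD
  by_contra hne
  have hD0 : D ≠ 0 := sub_ne_zero.mpr hne
  have hDle : D.natDegree ≤ n :=
    (natDegree_sub_le _ _).trans (max_le ((natDegree_C_mul_le _ _).trans hPdeg.le)
      ((natDegree_C_mul_le _ _).trans hQdeg.le))
  have hDn : D.coeff n = 0 := by
    have hPn : P.coeff n = P.leadingCoeff := hPdeg ▸ rfl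
    have hQn : Q.coeff n = Q.leadingCoeff := hQdeg ▸ rfl
    rw [hD, coeff_sub, coeff_C_mul, coeff_C_mul, hPn, hQn, mul_comm, sub_self]
  have hDdeg : D.natDegree < n :=
    hDle.lt_of_ne fun h => hD0 (leadingCoeff_eq_zero.mp (by rwa [leadingCoeff, h]))
  have hDD : discreteForm S w p D D =
      Q.leadingCoeff * discreteForm S w p P D - P.leadingCoeff * discreteForm S w p Q D := by
    simp only [discreteForm, mul_sum, ← sum_sub_distrib, hD, eval_sub, eval_mul, eval_C]
    exact sum_congr rfl fun _ _ => by ring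
  rw [hP D hDdeg, hQ D hDdeg, mul_zero, mul_zero, sub_zero] at hDD
  exact (discreteForm_self_pos hp hw hD0 (hDdeg.trans hn)).ne' hDD

theorem IsOrthogonalPoly.eval_eq_zero_iff {P Q : ℝ[X]} (hP : IsOrthogonalPoly S w p n P)
    (hQ : IsOrthogonalPoly S w p n Q) (hPdeg : P.natDegree = n) (hQdeg : Q.natDegree = n)
    (hp : Set.InjOn p S) (hw : ∀ s ∈ S, 0 < w s) (hn0 : 0 < n) (hn : n < #S) (y : ℝ) :
    Q.eval y = 0 ↔ P.eval y = 0 := by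
  have hlc {R : ℝ[X]} (hR : R.natDegree = n) : R.leadingCoeff ≠ 0 :=
    leadingCoeff_ne_zero.mpr fun h => by simp [h] at hR; omega
  have hPQ := congrArg (eval y) (hP.C_leadingCoeff_mul_eq hQ hPdeg hQdeg hp hw hn)
  simp only [eval_mul, eval_C] at hPQ
  constructor <;> intro h
  · simpa [h, hlc hQdeg] using hPQ
  · simpa [h, hlc hPdeg] using hPQ.symm

theorem isOrthogonalPoly_range_succ_iff {N : ℕ} {P : ℝ[X]} (hP : P.eval (p N) = 0) :
    IsOrthogonalPoly (range (N + 1)) w p n P ↔ IsOrthogonalPoly (range N) w p n P := by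
  simp only [IsOrthogonalPoly, discreteForm, sum_range_succ, hP, mul_zero, zero_mul, add_zero]

theorem IsOrthogonalPoly.discreteForm_eq_eval_mul {P f R : ℝ[X]} {y : ℝ}
    (hP : IsOrthogonalPoly S w p n P) (hPf : P = (X - C y) * f) (hf : f.natDegree < n)
    (hR : R.natDegree ≤ n) :
    discreteForm S w p R f = R.eval y * discreteForm S w p 1 f := by
  set h := (R - C (R.eval y)) /ₘ (X - C y)
  have hRh : (X - C y) * h = R - C (R.eval y) := mul_divByMonic_eq_iff_isRoot.mpr (by simp)
  have hh : h.natDegree < n := by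
    rw [natDegree_divByMonic _ (monic_X_sub_C y), natDegree_X_sub_C, natDegree_sub_C]
    omega
  have hsplit (x : ℝ) : R.eval x * f.eval x = R.eval y * f.eval x + P.eval x * h.eval x := by
    have := congrArg (eval x) hRh
    simp only [eval_sub, eval_mul, eval_C, eval_X] at this
    rw [hPf, eval_mul, eval_sub, eval_X, eval_C]
    linear_combination -f.eval x * this
  calc discreteForm S w p R f
      = ∑ s ∈ S, (R.eval y * (w s * (1 : ℝ[X]).eval (p s) * f.eval (p s))
          + w s * P.eval (p s) * h.eval (p s)) :=
        sum_congr rfl fun s _ => by rw [eval_one]; linear_combination w s * hsplit (p s)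
    _ = R.eval y * discreteForm S w p 1 f := by
        rw [sum_add_distrib, ← mul_sum, ← discreteForm, ← discreteForm, hP h hh, add_zero]

theorem IsOrthogonalPoly.eval_ne_zero_of_eq_X_sub_C_mul {P f : ℝ[X]} {y : ℝ}
    (hP : IsOrthogonalPoly S w p n P) (hPf : P = (X - C y) * f) (hf : f.natDegree < n)
    (hp : Set.InjOn p S) (hw : ∀ s ∈ S, 0 < w s) (hf0 : f ≠ 0) (hn : n ≤ #S) :
    f.eval y ≠ 0 := by
  intro h0
  have hff := hP.discreteForm_eq_eval_mul hPf hf hf.le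
  rw [h0, zero_mul] at hff
  exact (discreteForm_self_pos hp hw hf0 (hf.trans_le hn)).ne' hff

end DiscreteForm

section AddedNode

variable {N n : ℕ} {w p : ℕ → ℝ} {P Q f : ℝ[X]} {y : ℝ}

theorem IsOrthogonalPoly.eval_mul_discreteForm_self (hP : IsOrthogonalPoly (range N) w p n P)
    (hQ : IsOrthogonalPoly (range (N + 1)) w p n Q) (hQdeg : Q.natDegree ≤ n)
    (hPf : P = (X - C y) * f) (hf : f.natDegree < n) :
    Q.eval y * discreteForm (range N) w p f f
      = -(w N * Q.eval (p N) * f.eval (p N) * f.eval y) := by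
  have hQf := hP.discreteForm_eq_eval_mul hPf hf hQdeg
  have hff := hP.discreteForm_eq_eval_mul hPf hf hf.le
  have hQf' : discreteForm (range N) w p Q f + w N * Q.eval (p N) * f.eval (p N) = 0 :=
    (sum_range_succ _ _).symm.trans (hQ f hf)
  rw [hff]
  linear_combination f.eval y * hQf' - f.eval y * hQf

theorem IsOrthogonalPoly.exists_pos_eval_mul_eval_eq (hP : IsOrthogonalPoly (range N) w p n P)
    (hQ : IsOrthogonalPoly (range (N + 1)) w p n Q) (hQdeg : Q.natDegree ≤ n)
    (hPf : P = (X - C y) * f) (hf : f.natDegree < n) (hf0 : f ≠ 0)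
    (hp : Set.InjOn p (range N)) (hw : ∀ s ∈ range N, 0 < w s) (hwN : 0 < w N) (hnN : n ≤ N)
    (hQc : Q.eval (p N) ≠ 0) :
    ∃ κ > 0, Q.eval y * Q.eval (p N) = -κ * (f.eval (p N) * f.eval y) := by
  have hS := discreteForm_self_pos hp hw hf0 (by rw [card_range]; omega)
  refine ⟨w N * Q.eval (p N) ^ 2 / discreteForm (range N) w p f f, by positivity, ?_⟩
  have key := hP.eval_mul_discreteForm_self hQ hQdeg hPf hf
  field_simp
  linear_combination key

variable {a b : ℝ}

theorem IsOrthogonalPoly.exists_sign_at_adjacent_roots (hP : IsOrthogonalPoly (range N) w p n P)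
    (hQ : IsOrthogonalPoly (range (N + 1)) w p n Q) (hPdeg : P.natDegree = n)
    (hQdeg : Q.natDegree ≤ n) (hp : Set.InjOn p (range N)) (hw : ∀ s ∈ range N, 0 < w s)
    (hwN : 0 < w N) (hnN : n ≤ N) (hab : a < b) (ha : P.eval a = 0) (hb : P.eval b = 0)
    (hgap : ∀ x ∈ Set.Ioo a b, P.eval x ≠ 0) (hc : P.eval (p N) ≠ 0) (hQc : Q.eval (p N) ≠ 0) :
    ∃ g : ℝ[X], (∀ x ∈ Set.Icc a b, g.eval x ≠ 0) ∧ g.eval (p N) ≠ 0 ∧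
      (∃ κ > 0, Q.eval a * Q.eval (p N) = κ * ((p N - b) * (g.eval a * g.eval (p N)))) ∧
      (∃ κ > 0, Q.eval b * Q.eval (p N) = κ * ((a - p N) * (g.eval b * g.eval (p N)))) := by
  obtain ⟨g, hPa⟩ := exists_eq_X_sub_C_mul_X_sub_C_mul ha hb hab.ne
  have hPb : P = (X - C b) * ((X - C a) * g) := by rw [hPa, mul_left_comm]
  have hP0 : P ≠ 0 := by rintro rfl; exact hc eval_zero
  have hfa := hPdeg ▸ natDegree_lt_of_eq_X_sub_C_mul hP0 hPa
  have hfb := hPdeg ▸ natDegree_lt_of_eq_X_sub_C_mul hP0 hPb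
  have hfa0 : (X - C b) * g ≠ 0 := by rintro h; rw [h, mul_zero] at hPa; exact hP0 hPa
  have hfb0 : (X - C a) * g ≠ 0 := by rintro h; rw [h, mul_zero] at hPb; exact hP0 hPb
  have hnS : n ≤ #(range N) := by rwa [card_range]
  have hga := hP.eval_ne_zero_of_eq_X_sub_C_mul hPa hfa hp hw hfa0 hnS
  have hgb := hP.eval_ne_zero_of_eq_X_sub_C_mul hPb hfb hp hw hfb0 hnS
  have hPeval (x : ℝ) : P.eval x = (x - a) * ((x - b) * g.eval x) := by
    rw [hPa, eval_mul, eval_mul, eval_sub, eval_sub, eval_X, eval_C, eval_C]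
  simp only [eval_mul, eval_sub, eval_X, eval_C, ne_eq, mul_eq_zero, not_or] at hga hgb
  refine ⟨g, fun x hx => ?_, fun h => hc (by rw [hPeval, h, mul_zero, mul_zero]), ?_, ?_⟩
  · rcases hx.1.eq_or_lt with rfl | hax
    · exact hga.2
    rcases hx.2.eq_or_lt with rfl | hxb
    · exact hgb.2
    exact fun h => hgap x ⟨hax, hxb⟩ (by rw [hPeval, h, mul_zero, mul_zero])
  · obtain ⟨κ, hκ, h⟩ := hP.exists_pos_eval_mul_eval_eq hQ hQdeg hPa hfa hfa0 hp hw hwN hnN hQc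
    refine ⟨κ * (b - a), mul_pos hκ (sub_pos.mpr hab), ?_⟩
    rw [h]
    simp only [eval_mul, eval_sub, eval_X, eval_C]
    ring
  · obtain ⟨κ, hκ, h⟩ := hP.exists_pos_eval_mul_eval_eq hQ hQdeg hPb hfb hfb0 hp hw hwN hnN hQc
    refine ⟨κ * (b - a), mul_pos hκ (sub_pos.mpr hab), ?_⟩
    rw [h]
    simp only [eval_mul, eval_sub, eval_X, eval_C]
    ring

theorem IsOrthogonalPoly.exists_roots_of_mem_Ioo (hP : IsOrthogonalPoly (range N) w p n P)
    (hQ : IsOrthogonalPoly (range (N + 1)) w p n Q) (hPdeg : P.natDegree = n)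
    (hQdeg : Q.natDegree ≤ n) (hp : Set.InjOn p (range N)) (hw : ∀ s ∈ range N, 0 < w s)
    (hwN : 0 < w N) (hnN : n ≤ N) (ha : P.eval a = 0) (hb : P.eval b = 0)
    (hgap : ∀ x ∈ Set.Ioo a b, P.eval x ≠ 0) (hc : P.eval (p N) ≠ 0) (hQc : Q.eval (p N) ≠ 0)
    (hcab : p N ∈ Set.Ioo a b) :
    (∃ y ∈ Set.Ioo a (p N), Q.eval y = 0) ∧ (∃ y ∈ Set.Ioo (p N) b, Q.eval y = 0) := by
  obtain ⟨g, hg, -, ⟨κ, hκ, hQa⟩, ⟨κ', hκ', hQb⟩⟩ := hP.exists_sign_at_adjacent_roots hQ hPdeg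
    hQdeg hp hw hwN hnN (hcab.1.trans hcab.2) ha hb hgap hc hQc
  have hgac : 0 < g.eval a * g.eval (p N) := mul_pos_of_forall_mem_Icc_ne_zero g.continuous
    hcab.1.le fun x hx => hg x ⟨hx.1, hx.2.trans hcab.2.le⟩
  have hgcb : 0 < g.eval b * g.eval (p N) := by
    rw [mul_comm]
    exact mul_pos_of_forall_mem_Icc_ne_zero g.continuous hcab.2.le
      fun x hx => hg x ⟨hcab.1.le.trans hx.1, hx.2⟩
  refine ⟨exists_mem_Ioo_eq_zero_of_mul_neg Q.continuous hcab.1.le ?_,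
    exists_mem_Ioo_eq_zero_of_mul_neg Q.continuous hcab.2.le ?_⟩
  · rw [hQa]
    exact mul_neg_of_pos_of_neg hκ (mul_neg_of_neg_of_pos (sub_neg.mpr hcab.2) hgac)
  · rw [mul_comm, hQb]
    exact mul_neg_of_pos_of_neg hκ' (mul_neg_of_neg_of_pos (sub_neg.mpr hcab.1) hgcb)

theorem IsOrthogonalPoly.exists_root_of_notMem_Ioo (hP : IsOrthogonalPoly (range N) w p n P)
    (hQ : IsOrthogonalPoly (range (N + 1)) w p n Q) (hPdeg : P.natDegree = n)
    (hQdeg : Q.natDegree ≤ n) (hp : Set.InjOn p (range N)) (hw : ∀ s ∈ range N, 0 < w s)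
    (hwN : 0 < w N) (hnN : n ≤ N) (hab : a < b) (ha : P.eval a = 0) (hb : P.eval b = 0)
    (hgap : ∀ x ∈ Set.Ioo a b, P.eval x ≠ 0) (hc : P.eval (p N) ≠ 0) (hQc : Q.eval (p N) ≠ 0)
    (hcab : p N ∉ Set.Ioo a b) :
    ∃ y ∈ Set.Ioo a b, Q.eval y = 0 := by
  obtain ⟨g, hg, hgc, ⟨κ, hκ, hQa⟩, ⟨κ', hκ', hQb⟩⟩ := hP.exists_sign_at_adjacent_roots hQ hPdeg
    hQdeg hp hw hwN hnN hab ha hb hgap hc hQc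
  have hgab : 0 < g.eval a * g.eval b := mul_pos_of_forall_mem_Icc_ne_zero g.continuous hab.le hg
  have hout : (p N - b) * (a - p N) < 0 := by
    have hca : p N ≠ a := fun h => hc (h ▸ ha)
    have hcb : p N ≠ b := fun h => hc (h ▸ hb)
    rcases hca.lt_or_gt with h | h
    · nlinarith
    · have : b < p N := (le_of_not_gt fun h' => hcab ⟨h, h'⟩).lt_of_ne' hcb
      nlinarith
  have hQab : Q.eval a * Q.eval b * Q.eval (p N) ^ 2
      = κ * κ' * ((p N - b) * (a - p N)) * (g.eval a * g.eval b) * g.eval (p N) ^ 2 := by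
    linear_combination (Q.eval b * Q.eval (p N)) * hQa
      + (κ * ((p N - b) * (g.eval a * g.eval (p N)))) * hQb
  refine exists_mem_Ioo_eq_zero_of_mul_neg Q.continuous hab.le
    (neg_of_mul_neg_left (hQab ▸ ?_) (sq_nonneg (Q.eval (p N))))
  exact mul_neg_of_neg_of_pos (mul_neg_of_neg_of_pos (mul_neg_of_pos_of_neg (mul_pos hκ hκ') hout)
    hgab) (by positivity)

end AddedNode

/-- Adding one support point to a discrete orthogonality measure:
behaviour of the zeros of the degree-`n` orthogonal polynomial. -/
theorem stmt_0 (N n : ℕ) (hn : 1 ≤ n) (hnN : n ≤ N - 1)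
    (p : ℕ → ℝ) (hp : Set.InjOn p (Set.Iic N))
    (w : ℕ → ℝ) (hw : ∀ s ≤ N, 0 < w s)
    (P Q : Polynomial ℝ)
    (hPdeg : P.natDegree = n)
    (hPorth : ∀ f : Polynomial ℝ, f.natDegree < n →
      ∑ s ∈ Finset.range N, w s * P.eval (p s) * f.eval (p s) = 0)
    (hQdeg : Q.natDegree = n)
    (hQorth : ∀ f : Polynomial ℝ, f.natDegree < n →
      ∑ s ∈ Finset.range (N + 1), w s * Q.eval (p s) * f.eval (p s) = 0)
    (Y : ℕ → ℝ)
    (hYmono : ∀ i j, 1 ≤ i → i < j → j ≤ n → Y i < Y j)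
    (hYroot : ∀ i, 1 ≤ i → i ≤ n → P.eval (Y i) = 0)
    (hYall : ∀ y : ℝ, P.eval y = 0 → ∃ i, 1 ≤ i ∧ i ≤ n ∧ y = Y i) :
    -- (i) if `p N` is a zero of `P`, the zeros of `Q` are exactly those of `P`
    (P.eval (p N) = 0 → ∀ y : ℝ, Q.eval y = 0 ↔ P.eval y = 0) ∧
    -- (ii) if `p N` is not a zero of `P` and `p N ∉ (Y k, Y (k+1))`,
    -- then `Q` has a zero in `(Y k, Y (k+1))`
    (P.eval (p N) ≠ 0 → ∀ k, 1 ≤ k → k + 1 ≤ n →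
      p N ∉ Set.Ioo (Y k) (Y (k + 1)) →
      ∃ y ∈ Set.Ioo (Y k) (Y (k + 1)), Q.eval y = 0) ∧
    -- (iii) if `p N` is not a zero of `P` and `p N ∈ (Y k, Y (k+1))`,
    -- then `Q` has a zero in each of `(Y k, p N)` and `(p N, Y (k+1))`
    (P.eval (p N) ≠ 0 → ∀ k, 1 ≤ k → k + 1 ≤ n →
      p N ∈ Set.Ioo (Y k) (Y (k + 1)) →
      (∃ y ∈ Set.Ioo (Y k) (p N), Q.eval y = 0) ∧
      (∃ y ∈ Set.Ioo (p N) (Y (k + 1)), Q.eval y = 0)) := by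
  have hP : IsOrthogonalPoly (range N) w p n P := hPorth
  have hQ : IsOrthogonalPoly (range (N + 1)) w p n Q := hQorth
  have hpN : Set.InjOn p (range N) := hp.mono fun s hs => by
    simp only [coe_range, Set.mem_Iio, Set.mem_Iic] at hs ⊢; omega
  have hpN1 : Set.InjOn p (range (N + 1)) := hp.mono fun s hs => by
    simp only [coe_range, Set.mem_Iio, Set.mem_Iic] at hs ⊢; omega
  have hwN : ∀ s ∈ range N, 0 < w s := fun s hs => hw s (by rw [mem_range] at hs; omega)
  have hwN1 : ∀ s ∈ range (N + 1), 0 < w s := fun s hs => hw s (by rw [mem_range] at hs; omega)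
  have hQc (hc : P.eval (p N) ≠ 0) : Q.eval (p N) ≠ 0 := fun h => hc <|
    (((isOrthogonalPoly_range_succ_iff h).mp hQ).eval_eq_zero_iff hP hQdeg hPdeg hpN hwN hn
      (by rw [card_range]; omega) _).mpr h
  have hY : StrictMonoOn Y (Set.Icc 1 n) := fun i hi j hj hij => hYmono i j hi.1 hij hj.2
  have hgap (k : ℕ) (hk1 : 1 ≤ k) (hk2 : k + 1 ≤ n) (x : ℝ) (hx : x ∈ Set.Ioo (Y k) (Y (k + 1))) :
      P.eval x ≠ 0 := fun h0 => by
    obtain ⟨i, hi1, hin, rfl⟩ := hYall x h0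
    exact hY.notMem_Ioo ⟨hi1, hin⟩ hk1 hk2 hx
  refine ⟨fun hc => ((isOrthogonalPoly_range_succ_iff hc).mpr hP).eval_eq_zero_iff hQ hPdeg hQdeg
    hpN1 hwN1 hn (by rw [card_range]; omega), fun hc k hk1 hk2 hout => ?_, fun hc k hk1 hk2 hin => ?_⟩
  · exact hP.exists_root_of_notMem_Ioo hQ hPdeg hQdeg.le hpN hwN (hw N le_rfl) (by omega)
      (hYmono k (k + 1) hk1 k.lt_succ_self hk2) (hYroot k hk1 (by omega)) (hYroot (k + 1) (by omega) hk2)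
      (hgap k hk1 hk2) hc (hQc hc) hout
  · exact hP.exists_roots_of_mem_Ioo hQ hPdeg hQdeg.le hpN hwN (hw N le_rfl) (by omega)
      (hYroot k hk1 (by omega)) (hYroot (k + 1) (by omega) hk2) (hgap k hk1 hk2) hc (hQc hc) hin
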